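/- Commutation of rectification and diffusion: let p₀(x₀) be a density on ℝ^d, and for t > 0 let the noisy density be pₜ(xₜ) = ∫ p₀(x₀) k_t(xₜ|x₀) dx₀ where k_t(xₜ|x₀) is a Markov transition kernel density (independent of the attribute c). Let p(c|x₀) be a conditional attribute density with marginal p₀(c) = ∫ p₀(x₀)p(c|x₀)dx₀ > 0, and define the rectified clean density p̃₀(x₀) = p₀(x₀) ∫ (f(c)/p₀(c)) p(c|x₀) dc. Define the noisy conditional p(c|xₜ) := ∫ p(x₀|xₜ) p(c|x₀) dx₀ where p(x₀|xₜ) = p₀(x₀)k_t(xₜ|x₀)/pₜ(xₜ), and pₜ(c) := ∫ pₜ(xₜ) p(c|xₜ) dxₜ. Then the pushed-forward rectified density satisfies ∫ p̃₀(x₀) k_t(xₜ|x₀) dx₀ = pₜ(xₜ) · ∫ (f(c)/pₜ(c)) p(c|xₜ) dc, provided pₜ(c) = p₀(c) for all c. -/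
import Mathlib


open MeasureTheory
open scoped ENNReal

/-- Theorem 2 of the paper: rectification commutes with the diffusion (noising)
kernel — pushing the rectified clean density through the kernel equals the original noisy
density multiplied by the rectification function at time t, provided pₜ(c) = p₀(c). -/
theorem rectification_commutes_with_diffusion
    {X C : Type*} [MeasurableSpace X] [MeasurableSpace C]
    (μ : Measure X) (ν : Measure C) [SigmaFinite μ] [SigmaFinite ν]
    (p0 : X → ℝ≥0∞) (k : X → X → ℝ≥0∞) (pc : X → C → ℝ≥0∞) (f : C → ℝ≥0∞)
    (hp0_meas : Measurable p0)
    (hk_meas : Measurable (Function.uncurry k))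
    (hpc_meas : Measurable (Function.uncurry pc))
    (hf_meas : Measurable f)
    (hp0_total : ∫⁻ x, p0 x ∂μ = 1)
    (hk_total : ∀ x0, ∫⁻ xt, k x0 xt ∂μ = 1)
    (hpc_total : ∀ x0, ∫⁻ c, pc x0 c ∂ν = 1)
    (hf_total : ∫⁻ c, f c ∂ν = 1)
    (pt : X → ℝ≥0∞) (hpt : ∀ xt, pt xt = ∫⁻ x0, p0 x0 * k x0 xt ∂μ)
    (P0 : C → ℝ≥0∞) (hP0 : ∀ c, P0 c = ∫⁻ x0, p0 x0 * pc x0 c ∂μ)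
    (hP0_pos : ∀ c, P0 c ≠ 0) (hP0_fin : ∀ c, P0 c ≠ ⊤)
    (hpt_pos : ∀ xt, pt xt ≠ 0) (hpt_fin : ∀ xt, pt xt ≠ ⊤)
    (pcxt : C → X → ℝ≥0∞)
    (hpcxt : ∀ c xt, pcxt c xt = ∫⁻ x0, (p0 x0 * k x0 xt / pt xt) * pc x0 c ∂μ)
    (Pt : C → ℝ≥0∞) (hPt : ∀ c, Pt c = ∫⁻ xt, pt xt * pcxt c xt ∂μ)
    (hPtP0 : ∀ c, Pt c = P0 c) :
    ∀ xt, ∫⁻ x0, (p0 x0 * ∫⁻ c, (f c / P0 c) * pc x0 c ∂ν) * k x0 xt ∂μ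
        = pt xt * ∫⁻ c, (f c / Pt c) * pcxt c xt ∂ν := by
  intro xt
  set g : C → ℝ≥0∞ := fun c => f c / P0 c with hg_def
  -- measurability of P0
  have hP0m : Measurable P0 := by
    have : Measurable fun c => ∫⁻ x0, p0 x0 * pc x0 c ∂μ := by
      apply Measurable.lintegral_prod_left (f := fun x0 c => p0 x0 * pc x0 c)
      exact (hp0_meas.comp measurable_fst).mul hpc_meas
    simpa [funext hP0] using this
  have hgm : Measurable g := hf_meas.div hP0m
  -- measurability of fun x0 => k x0 xt
  have hkxt : Measurable fun x0 => k x0 xt :=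
    hk_meas.comp (measurable_id.prodMk measurable_const)
  -- the common double integral
  have key : ∫⁻ x0, (p0 x0 * ∫⁻ c, g c * pc x0 c ∂ν) * k x0 xt ∂μ
      = ∫⁻ c, g c * ∫⁻ x0, p0 x0 * k x0 xt * pc x0 c ∂μ ∂ν := by
    have step1 : ∀ x0, (p0 x0 * ∫⁻ c, g c * pc x0 c ∂ν) * k x0 xt
        = ∫⁻ c, (g c * pc x0 c) * (p0 x0 * k x0 xt) ∂ν := by
      intro x0
      have hm : Measurable fun c => g c * pc x0 c :=
        hgm.mul (hpc_meas.comp (measurable_const.prodMk measurable_id))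
      rw [lintegral_mul_const _ hm, mul_comm (p0 x0), mul_assoc]
    simp_rw [step1]
    rw [lintegral_lintegral_swap]
    · refine lintegral_congr fun c => ?_
      have hm : Measurable fun x0 => p0 x0 * k x0 xt * pc x0 c :=
        (hp0_meas.mul hkxt).mul (hpc_meas.comp (measurable_id.prodMk measurable_const))
      rw [← lintegral_const_mul _ hm]
      refine lintegral_congr fun x0 => by ring
    · apply Measurable.aemeasurable
      apply Measurable.mul
      · exact ((hgm.comp measurable_snd).mul hpc_meas)
      · exact (hp0_meas.comp measurable_fst).mul
          (hk_meas.comp ((measurable_fst).prodMk measurable_const))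
  rw [key]
  -- now rewrite the RHS
  have hpcxt' : ∀ c, pcxt c xt = (pt xt)⁻¹ * ∫⁻ x0, p0 x0 * k x0 xt * pc x0 c ∂μ := by
    intro c
    rw [hpcxt]
    have hm : Measurable fun x0 => p0 x0 * k x0 xt * pc x0 c :=
      (hp0_meas.mul hkxt).mul (hpc_meas.comp (measurable_id.prodMk measurable_const))
    rw [← lintegral_const_mul _ hm]
    refine lintegral_congr fun x0 => ?_
    rw [ENNReal.div_eq_inv_mul]
    ring
  have hrw : ∀ c, (f c / Pt c) * pcxt c xt
      = (pt xt)⁻¹ * (g c * ∫⁻ x0, p0 x0 * k x0 xt * pc x0 c ∂μ) := by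
    intro c
    rw [hpcxt' c, hPtP0 c]
    ring
  simp_rw [hrw]
  rw [lintegral_const_mul' _ _ (ENNReal.inv_ne_top.mpr (hpt_pos xt)), ← mul_assoc,
    ENNReal.mul_inv_cancel (hpt_pos xt) (hpt_fin xt), one_mul]
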